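/- arXiv:0707.0906 — 3 statements merged into one kernel-verified Lean document; each statement's English description precedes it below -/
import Mathlib

section
/- Let (G,μ) be an ergodic discrete measured groupoid with atom-free measure μ, and let A, B ⊂ G^0 be Borel subsets of positive measure. Then μ(s^{-1}(A) ∩ r^{-1}(B)) = ∞. -/
open MeasureTheory

/-- A (minimal formalization of a) discrete measured groupoid: a standard Borel groupoid
`G` with unit space `X`, Borel source and range maps with countable source fibers, and an
invariant measure `μ` on the unit space. -/
structure DMGroupoid (G X : Type) [MeasurableSpace G] [MeasurableSpace X] where
  s : G → X
  r : G → X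
  meas_s : Measurable s
  meas_r : Measurable r
  countable_fibers : ∀ x : X, (s ⁻¹' {x}).Countable
  μ : Measure X
  invariant : ∀ E : Set G, MeasurableSet E →
    ∫⁻ x, Measure.count (E ∩ s ⁻¹' {x}) ∂μ = ∫⁻ x, Measure.count (E ∩ r ⁻¹' {x}) ∂μ

/-- The extension of `μ` to a measure on the groupoid:
`μ(E) = ∫_{G⁰} #(E ∩ s⁻¹(x)) dμ(x)`. -/
noncomputable def DMGroupoid.gMeasure {G X : Type} [MeasurableSpace G] [MeasurableSpace X]
    (D : DMGroupoid G X) (E : Set G) : ENNReal :=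
  ∫⁻ x, Measure.count (E ∩ D.s ⁻¹' {x}) ∂D.μ

/-- Ergodicity (saturation form): for every Borel `A ⊆ G⁰` of positive measure the
saturation `A^G = {x : ∃ γ, s γ ∈ A, r γ = x}` has full measure. -/
def DMGroupoid.SatErgodic {G X : Type} [MeasurableSpace G] [MeasurableSpace X]
    (D : DMGroupoid G X) : Prop :=
  ∀ A : Set X, MeasurableSet A → D.μ A ≠ 0 →
    D.μ {x : X | ∃ γ : G, D.s γ ∈ A ∧ D.r γ = x}ᶜ = 0

/-!
Since `μ` has no atoms, `A` contains infinitely many disjoint Borel sets `Aₙ` of positive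
measure: pushed to `ℝ` by a Borel embedding, `μ` restricted to `A` has a continuous
distribution function, and the `Aₙ` are preimages of intervals on which it increases.
By ergodicity almost every point of `B` is the range of an arrow with source in `Aₙ`, so by
invariance of `μ` each `s⁻¹(Aₙ) ∩ r⁻¹(B)` has measure at least `μ(B) > 0`. These pieces are
disjoint and lie in `s⁻¹(A) ∩ r⁻¹(B)`, whose measure is therefore infinite.
-/

open ProbabilityTheory Set Function

open scoped ENNReal

theorem le_lintegral_finsetSum {α β : Type*} [MeasurableSpace α] (μ : Measure α)
    (s : Finset β) (f : β → α → ℝ≥0∞) :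
    ∑ b ∈ s, ∫⁻ a, f b a ∂μ ≤ ∫⁻ a, ∑ b ∈ s, f b a ∂μ := by
  classical
  induction s using Finset.induction_on with
  | empty => simp
  | insert b s hb ih =>
    simp only [Finset.sum_insert hb]
    exact (add_le_add_right ih _).trans (le_lintegral_add _ _)

theorem le_lintegral_tsum {α β : Type*} [MeasurableSpace α] (μ : Measure α)
    (f : β → α → ℝ≥0∞) : ∑' b, ∫⁻ a, f b a ∂μ ≤ ∫⁻ a, ∑' b, f b a ∂μ := by
  rw [ENNReal.tsum_eq_iSup_sum]
  exact iSup_le fun s =>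
    (le_lintegral_finsetSum μ s f).trans (lintegral_mono fun a => ENNReal.sum_le_tsum s)

namespace ProbabilityTheory

theorem continuous_cdf (P : Measure ℝ) [IsProbabilityMeasure P] [NullSingletonClass P] :
    Continuous (cdf P) := by
  refine continuous_iff_continuousAt.2 fun t => ?_
  rw [(monotone_cdf P).continuousAt_iff_leftLim_eq_rightLim, StieltjesFunction.rightLim_eq]
  have hjump := (cdf P).measure_singleton t
  rw [measure_cdf, measure_singleton, eq_comm, ENNReal.ofReal_eq_zero, sub_nonpos] at hjump
  exact le_antisymm ((monotone_cdf P).leftLim_le le_rfl) hjump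

theorem Ioo_subset_range_cdf (P : Measure ℝ) [IsProbabilityMeasure P] [NullSingletonClass P] :
    Ioo 0 1 ⊆ range (cdf P) := fun _ hy =>
  mem_range_of_exists_le_of_exists_ge (continuous_cdf P)
    (((tendsto_cdf_atBot P).eventually_lt_const hy.1).exists.imp fun _ => le_of_lt)
    (((tendsto_cdf_atTop P).eventually_const_lt hy.2).exists.imp fun _ => le_of_lt)

end ProbabilityTheory

theorem Real.exists_pairwise_disjoint_measure_ne_zero (P : Measure ℝ)
    [IsProbabilityMeasure P] [NullSingletonClass P] :
    ∃ I : ℕ → Set ℝ, (∀ n, MeasurableSet (I n) ∧ P (I n) ≠ 0) ∧ Pairwise (Disjoint on I) := by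
  obtain ⟨y, hy_mono, hy_mem, -⟩ := exists_seq_strictMono_tendsto' (zero_lt_one' ℝ)
  choose t ht using fun n => Ioo_subset_range_cdf P (hy_mem n)
  have ht_mono : StrictMono t := fun m n hmn =>
    (monotone_cdf P).reflect_lt (by rw [ht, ht]; exact hy_mono hmn)
  refine ⟨fun n => Ioc (t n) (t (n + 1)), fun n => ⟨measurableSet_Ioc, ?_⟩,
    by simpa using ht_mono.monotone.pairwise_disjoint_on_Ioc_succ⟩
  rw [← measure_cdf P, (cdf P).measure_Ioc, ht, ht, Ne, ENNReal.ofReal_eq_zero, not_le, sub_pos]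
  exact hy_mono n.lt_succ_self

theorem exists_pairwise_disjoint_subset_measure_ne_zero {X : Type*} [MeasurableSpace X]
    [StandardBorelSpace X] {μ : Measure X} [NullSingletonClass μ] {A : Set X}
    (hA : MeasurableSet A) (hA0 : μ A ≠ 0) (hA_top : μ A ≠ ∞) :
    ∃ A' : ℕ → Set X, (∀ n, MeasurableSet (A' n) ∧ A' n ⊆ A ∧ μ (A' n) ≠ 0) ∧
      Pairwise (Disjoint on A') := by
  obtain ⟨f, hf⟩ := exists_measurableEmbedding_real X
  have := cond_isProbabilityMeasure_of_finite hA0 hA_top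
  have : IsProbabilityMeasure ((μ[|A]).map f) :=
    Measure.isProbabilityMeasure_map hf.measurable.aemeasurable
  have : NullSingletonClass ((μ[|A]).map f) := ⟨fun t => by
    rw [hf.map_apply]
    exact cond_absolutelyContinuous ((subsingleton_singleton.preimage hf.injective).measure_zero μ)⟩
  obtain ⟨I, hI, hdisj⟩ := Real.exists_pairwise_disjoint_measure_ne_zero ((μ[|A]).map f)
  refine ⟨fun n => A ∩ f ⁻¹' I n, fun n => ⟨hA.inter (hf.measurable (hI n).1), inter_subset_left,
    ?_⟩, fun m n hmn => ((hdisj hmn).preimage f).mono inter_subset_right inter_subset_right⟩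
  have hIn := (hI n).2
  rw [hf.map_apply, cond_apply hA] at hIn
  exact right_ne_zero_of_mul hIn

namespace DMGroupoid

variable {G X : Type} [MeasurableSpace G] [MeasurableSpace X] (D : DMGroupoid G X)

theorem measure_le_gMeasure_of_satErgodic (herg : D.SatErgodic) {A B : Set X}
    (hA : MeasurableSet A) (hB : MeasurableSet B) (hA0 : D.μ A ≠ 0) :
    D.μ B ≤ D.gMeasure (D.s ⁻¹' A ∩ D.r ⁻¹' B) := by
  have hsat : ∀ᵐ x ∂D.μ, ∃ γ : G, D.s γ ∈ A ∧ D.r γ = x := ae_iff.2 (herg A hA hA0)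
  rw [gMeasure, D.invariant _ ((D.meas_s hA).inter (D.meas_r hB)), ← lintegral_indicator_one hB]
  refine lintegral_mono_ae (hsat.mono fun x ⟨γ, hγA, hγx⟩ => ?_)
  by_cases hx : x ∈ B
  · have hγ : γ ∈ (D.s ⁻¹' A ∩ D.r ⁻¹' B) ∩ D.r ⁻¹' {x} :=
      ⟨⟨hγA, show D.r γ ∈ B from hγx ▸ hx⟩, hγx⟩
    rw [indicator_of_mem hx, Pi.one_apply]
    exact (ENNReal.le_tsum (⟨γ, hγ⟩ : _)).trans Measure.le_count_apply
  · simp [indicator_of_notMem hx]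

theorem tsum_gMeasure_le [MeasurableSingletonClass X] {ι : Type*} [Countable ι] {E : ι → Set G}
    {F : Set G} (hE : ∀ i, MeasurableSet (E i)) (hdisj : Pairwise (Disjoint on E))
    (hEF : ∀ i, E i ⊆ F) : ∑' i, D.gMeasure (E i) ≤ D.gMeasure F := by
  -- the fiber-counting functions need not be measurable, so only superadditivity is available
  refine (le_lintegral_tsum D.μ _).trans (lintegral_mono fun x => ?_)
  rw [← measure_iUnion (fun i j hij => (hdisj hij).mono inter_subset_left inter_subset_left)
    fun i => (hE i).inter (D.meas_s (measurableSet_singleton x))]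
  exact measure_mono (iUnion_subset fun i => inter_subset_inter_left _ (hEF i))

end DMGroupoid

theorem gMeasure_inter_infinite_general {G X : Type}
    [MeasurableSpace G] [MeasurableSpace X]
    [StandardBorelSpace X]
    (D : DMGroupoid G X) [IsProbabilityMeasure D.μ]
    (herg : D.SatErgodic) (hatom : ∀ x : X, D.μ {x} = 0)
    (A B : Set X) (hA : MeasurableSet A) (hB : MeasurableSet B)
    (hA0 : D.μ A ≠ 0) (hB0 : D.μ B ≠ 0) :
    D.gMeasure (D.s ⁻¹' A ∩ D.r ⁻¹' B) = ⊤ := by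
  have : NullSingletonClass D.μ := ⟨hatom⟩
  obtain ⟨A', hA', hdisj⟩ :=
    exists_pairwise_disjoint_subset_measure_ne_zero hA hA0 (measure_ne_top _ _)
  refine top_le_iff.1 ?_
  calc ⊤ = ∑' _ : ℕ, D.μ B := (ENNReal.tsum_const_eq_top_of_ne_zero hB0).symm
    _ ≤ ∑' n, D.gMeasure (D.s ⁻¹' A' n ∩ D.r ⁻¹' B) := ENNReal.tsum_le_tsum fun n =>
      D.measure_le_gMeasure_of_satErgodic herg (hA' n).1 hB (hA' n).2.2
    _ ≤ D.gMeasure (D.s ⁻¹' A ∩ D.r ⁻¹' B) :=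
      D.tsum_gMeasure_le (fun n => (D.meas_s (hA' n).1).inter (D.meas_r hB))
        (fun m n hmn => ((hdisj hmn).preimage D.s).mono inter_subset_left inter_subset_left)
        fun n => inter_subset_inter_left _ (preimage_mono (hA' n).2.1)

/-- for an ergodic discrete measured groupoid with atom-free unit space
measure and Borel sets `A`, `B` of positive measure, `μ(s⁻¹(A) ∩ r⁻¹(B)) = ∞`. -/
theorem gMeasure_inter_infinite {G X : Type}
    [MeasurableSpace G] [MeasurableSpace X]
    [StandardBorelSpace G] [StandardBorelSpace X]
    (D : DMGroupoid G X) [IsProbabilityMeasure D.μ]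
    (herg : D.SatErgodic) (hatom : ∀ x : X, D.μ {x} = 0)
    (A B : Set X) (hA : MeasurableSet A) (hB : MeasurableSet B)
    (hA0 : D.μ A ≠ 0) (hB0 : D.μ B ≠ 0) :
    D.gMeasure (D.s ⁻¹' A ∩ D.r ⁻¹' B) = ⊤ :=
  gMeasure_inter_infinite_general D herg hatom A B hA hB hA0 hB0
end

section
/- Let f: X → Y be a Borel map between standard Borel spaces all of whose fibers are countable. Then the image f(X) is a Borel subset of Y, and there exists a countable Borel partition X = ⋃_{i∈ℕ} X_i such that the restriction of f to each X_i is injective. -/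
/-!
Refining the topology of `X`, we may assume `X` Polish and `f` continuous. Remove from `X` a
countable union of Borel sets on which `f` is injective, saturated with respect to the countably
many ways of placing finitely many points of one fiber in prescribed basic open sets. On the
remaining core `C` every such configuration splits at any coordinate: otherwise the values of that
coordinate form an analytic set on which `f` is injective, which two Lusin separations enlarge to
a Borel set on which `f` is injective, contradicting saturation. If `C` were nonempty, splitting
along a Cantor scheme would give a continuous map from Cantor space into a single fiber that is
locally constant nowhere, impossible for a countable fiber by Baire category. So the Borel pieces
cover `X`, and by Lusin–Souslin their images, hence the range of `f`, are Borel.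
-/

open MeasureTheory Set Function TopologicalSpace Metric PiNat Filter Topology

namespace LuzinNovikov

section Fibers

variable {X Y : Type*} (f : X → Y)

def fiberPartners (C : Set X) : Set X :=
  {z | ∃ w ∈ C, z ≠ w ∧ f z = f w}

def fiberTuples {ι : Type*} (C : Set X) (U : ι → Set X) : Set (ι → X) :=
  {x | (∀ i, x i ∈ C ∩ U i) ∧ ∀ i j, f (x i) = f (x j)}

variable {f}

lemma fiberPartners_mono : Monotone (fiberPartners f) :=
  fun _ _ hCD _ ⟨w, hw, hne, hfw⟩ => ⟨w, hCD hw, hne, hfw⟩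

lemma disjoint_fiberPartners_comm {A B : Set X} :
    Disjoint A (fiberPartners f B) ↔ Disjoint B (fiberPartners f A) := by
  have key : ∀ {A B : Set X}, Disjoint A (fiberPartners f B) → Disjoint B (fiberPartners f A) :=
    fun hAB => disjoint_left.2 fun w hwB ⟨z, hzA, hne, hfz⟩ =>
      disjoint_left.1 hAB hzA ⟨w, hwB, hne.symm, hfz.symm⟩
  exact ⟨key, key⟩

lemma injOn_iff_disjoint_fiberPartners {C : Set X} :
    InjOn f C ↔ Disjoint C (fiberPartners f C) := by
  simp only [InjOn, disjoint_left, fiberPartners, mem_ofPred_eq, not_exists, not_and]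
  exact forall₂_congr fun z _ => forall₂_congr fun w _ => by tauto

lemma fiberTuples_mono {ι : Type*} (U : ι → Set X) : Monotone (fiberTuples f · U) :=
  fun _ _ hCD _ ⟨hx, hfx⟩ => ⟨fun i => ⟨hCD (hx i).1, (hx i).2⟩, hfx⟩

lemma cond_mem_fiberTuples {k : ℕ} {U : List.Vector Bool k → Set X}
    {z w : List.Vector Bool k → X} (hz : z ∈ fiberTuples f C U) (hw : w ∈ fiberTuples f C U)
    {ν : List.Vector Bool k} (hzw : f (z ν) = f (w ν)) :
    (fun τ : List.Vector Bool (k + 1) => (bif τ.head then w else z) τ.tail) ∈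
      fiberTuples f C (fun τ => U τ.tail) := by
  have hfν : ∀ τ : List.Vector Bool (k + 1),
      f ((bif τ.head then w else z) τ.tail) = f (z ν) := by
    intro τ
    cases τ.head
    · exact hz.2 _ _
    · exact (hw.2 _ _).trans hzw.symm
  refine ⟨fun τ => ?_, fun τ τ' => (hfν τ).trans (hfν τ').symm⟩
  show (bif τ.head then w else z) τ.tail ∈ C ∩ U τ.tail
  cases τ.head
  · exact hz.1 _
  · exact hw.1 _

end Fibers

lemma exists_countable_subfamily_saturating {α ι : Type*} [Countable ι] (G : Set (Set α))
    (P : ι → Set α → Prop) (hP : ∀ i, Monotone (P i)) :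
    ∃ 𝒮 ⊆ G, 𝒮.Countable ∧
      ∀ i, ∀ 𝒯 ⊆ G, 𝒯.Countable → P i (⋃₀ 𝒯) → P i (⋃₀ 𝒮) := by
  have witness : ∀ i, ∃ 𝒯 ⊆ G, 𝒯.Countable ∧
      ∀ 𝒯' ⊆ G, 𝒯'.Countable → P i (⋃₀ 𝒯') → P i (⋃₀ 𝒯) := by
    intro i
    by_cases h : ∃ 𝒯 ⊆ G, 𝒯.Countable ∧ P i (⋃₀ 𝒯)
    · obtain ⟨𝒯, hG, hc, hPi⟩ := h
      exact ⟨𝒯, hG, hc, fun _ _ _ _ => hPi⟩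
    · push Not at h
      exact ⟨∅, empty_subset G, countable_empty, fun 𝒯 hG hc hPi => absurd hPi (h 𝒯 hG hc)⟩
  choose 𝒯 h𝒯G h𝒯c h𝒯 using witness
  exact ⟨⋃ i, 𝒯 i, iUnion_subset h𝒯G, countable_iUnion h𝒯c, fun i 𝒯' hG hc hPi =>
    hP i (sUnion_mono (subset_iUnion 𝒯 i)) (h𝒯 i 𝒯' hG hc hPi)⟩

def SplitsFiberTuples {X Y : Type*} (f : X → Y) (ℬ : Set (Set X)) (C : Set X) : Prop :=
  ∀ k (U : List.Vector Bool k → Set X), (∀ σ, U σ ∈ ℬ) → (fiberTuples f C U).Nonempty →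
    ∀ ν, ¬ InjOn f ((fun x => x ν) '' fiberTuples f C U)

section Polish

variable {X Y : Type*} [TopologicalSpace X] [PolishSpace X] [TopologicalSpace Y] [T2Space Y]
  {f : X → Y}

lemma analyticSet_fiberPartners (hf : Continuous f) {K : Set X} (hK : AnalyticSet K) :
    AnalyticSet (fiberPartners f K) := by
  have inter : ∀ {s t : Set (X × X)}, AnalyticSet s → AnalyticSet t → AnalyticSet (s ∩ t) :=
    fun hs ht => inter_eq_iInter ▸ AnalyticSet.iInter (Bool.forall_bool.2 ⟨ht, hs⟩)
  have hoff : AnalyticSet (diagonal X)ᶜ := by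
    simpa using isClosed_diagonal.isOpen_compl.analyticSet_image continuous_id
  have hfib : AnalyticSet {p : X × X | f p.1 = f p.2} :=
    (isClosed_eq hf.fst' hf.snd').analyticSet
  convert (inter (hK.preimage continuous_snd) (inter hoff hfib)).image_of_continuous
    continuous_fst using 1
  ext z
  simp [fiberPartners]

variable [MeasurableSpace X] [BorelSpace X]

lemma exists_measurableSet_injOn_superset (hf : Continuous f) {K : Set X} (hK : AnalyticSet K)
    (hinj : InjOn f K) : ∃ B, MeasurableSet B ∧ K ⊆ B ∧ InjOn f B := by
  rw [injOn_iff_disjoint_fiberPartners] at hinj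
  obtain ⟨B₀, hKB₀, hB₀, hB₀m⟩ := hK.measurablySeparable (analyticSet_fiberPartners hf hK) hinj
  obtain ⟨B₁, hKB₁, hB₁, hB₁m⟩ :=
    hK.measurablySeparable (analyticSet_fiberPartners hf hB₀m.analyticSet)
      (disjoint_fiberPartners_comm.1 hB₀.symm)
  refine ⟨B₀ ∩ B₁, hB₀m.inter hB₁m, subset_inter hKB₀ hKB₁, ?_⟩
  rw [injOn_iff_disjoint_fiberPartners]
  exact hB₁.symm.mono inter_subset_right (fiberPartners_mono inter_subset_left)

lemma measurableSet_fiberTuples {ι : Type*} [Countable ι] (hf : Continuous f) {C : Set X}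
    (hC : MeasurableSet C) {U : ι → Set X} (hU : ∀ i, IsOpen (U i)) :
    MeasurableSet (fiberTuples f C U) := by
  simp only [fiberTuples, ofPred_and, ofPred_forall]
  refine .inter (.iInter fun i => measurable_pi_apply i (hC.inter (hU i).measurableSet))
    (.iInter fun i => .iInter fun j => ?_)
  exact (isClosed_eq (hf.comp (continuous_apply i)) (hf.comp (continuous_apply j))).measurableSet

lemma exists_injOn_fiberTuples_diff_eq_empty {ι : Type*} [Countable ι] (hf : Continuous f)
    {C : Set X} (hC : MeasurableSet C) {U : ι → Set X} (hU : ∀ i, IsOpen (U i)) (ν : ι)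
    (hinj : InjOn f ((fun x => x ν) '' fiberTuples f C U)) :
    ∃ B, MeasurableSet B ∧ InjOn f B ∧ fiberTuples f (C \ B) U = ∅ := by
  obtain ⟨B, hBm, hKB, hBinj⟩ := exists_measurableSet_injOn_superset hf
    ((measurableSet_fiberTuples hf hC hU).analyticSet.image_of_continuous (continuous_apply ν))
    hinj
  refine ⟨B, hBm, hBinj, eq_empty_iff_forall_notMem.2 fun x hx => ?_⟩
  have hxC : x ∈ fiberTuples f C U := fiberTuples_mono U sdiff_subset hx
  exact ((hx.1 ν).1).2 (hKB (mem_image_of_mem _ hxC))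

lemma exists_countable_injOn_splitsFiberTuples_compl (hf : Continuous f) {ℬ : Set (Set X)}
    (hℬc : ℬ.Countable) (hℬo : ∀ U ∈ ℬ, IsOpen U) :
    ∃ 𝒮 : Set (Set X), 𝒮.Countable ∧ (∀ B ∈ 𝒮, MeasurableSet B ∧ InjOn f B) ∧
      SplitsFiberTuples f ℬ (⋃₀ 𝒮)ᶜ := by
  have : Countable ℬ := hℬc.to_subtype
  obtain ⟨𝒮, h𝒮G, h𝒮c, h𝒮⟩ := exists_countable_subfamily_saturating
    {B | MeasurableSet B ∧ InjOn f B}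
    (fun (i : Σ k, List.Vector Bool k → ℬ) V => fiberTuples f Vᶜ (fun σ => (i.2 σ : Set X)) = ∅)
    fun i V W hVW hV => subset_empty_iff.1 (hV ▸ fiberTuples_mono _ (compl_subset_compl.2 hVW))
  refine ⟨𝒮, h𝒮c, h𝒮G, fun k U hUℬ hne ν hinj => ?_⟩
  have h𝒮m : MeasurableSet (⋃₀ 𝒮)ᶜ := (MeasurableSet.sUnion h𝒮c fun B hB => (h𝒮G hB).1).compl
  obtain ⟨B, hBm, hBinj, hB⟩ := exists_injOn_fiberTuples_diff_eq_empty hf h𝒮m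
    (fun σ => hℬo _ (hUℬ σ)) ν hinj
  refine hne.ne_empty (h𝒮 ⟨k, fun σ => ⟨U σ, hUℬ σ⟩⟩ (insert B 𝒮)
    (insert_subset ⟨hBm, hBinj⟩ h𝒮G) (h𝒮c.insert B) ?_)
  rwa [sUnion_insert, compl_union, inter_comm, ← sdiff_eq]

end Polish

section Scheme

variable {X Y : Type*} [MetricSpace X] {f : X → Y} {C : Set X} {ℬ : Set (Set X)}

/-- Nodes of level `k` are binary strings of length `k` with the newest bit at the head, as in
`PiNat.res`. -/
structure SchemeLevel (f : X → Y) (C : Set X) (ℬ : Set (Set X)) (k : ℕ) where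
  pt : List.Vector Bool k → X
  nbhd : List.Vector Bool k → Set X
  nbhd_mem : ∀ σ, nbhd σ ∈ ℬ
  pt_mem : pt ∈ fiberTuples f C nbhd
  nbhd_subset_ball : ∀ σ, nbhd σ ⊆ ball (pt σ) ((1 / 2) ^ k)

lemma nonempty_schemeLevel_zero (hℬ : IsTopologicalBasis ℬ) {x : X} (hx : x ∈ C) :
    Nonempty (SchemeLevel f C ℬ 0) := by
  obtain ⟨U, hUℬ, hxU, hU⟩ := hℬ.mem_nhds_iff.1 (ball_mem_nhds x one_pos)
  exact ⟨⟨fun _ => x, fun _ => U, fun _ => hUℬ, ⟨fun _ => ⟨hx, hxU⟩, fun _ _ => rfl⟩,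
    fun _ => by simpa using hU⟩⟩

lemma SchemeLevel.exists_refinement (hℬ : IsTopologicalBasis ℬ)
    (hsplit : SplitsFiberTuples f ℬ C) {k : ℕ} (L : SchemeLevel f C ℬ k)
    (ν : List.Vector Bool k) :
    ∃ L' : SchemeLevel f C ℬ (k + 1), (∀ τ, closure (L'.nbhd τ) ⊆ L.nbhd τ.tail) ∧
      Disjoint (closure (L'.nbhd (false ::ᵥ ν))) (closure (L'.nbhd (true ::ᵥ ν))) := by
  obtain ⟨z, hz, w, hw, hzw, hne⟩ : ∃ z ∈ fiberTuples f C L.nbhd, ∃ w ∈ fiberTuples f C L.nbhd,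
      f (z ν) = f (w ν) ∧ z ν ≠ w ν := by
    have := hsplit k L.nbhd L.nbhd_mem ⟨L.pt, L.pt_mem⟩ ν
    simp only [InjOn, forall_mem_image] at this
    push Not at this
    exact this
  set r := dist (z ν) (w ν)
  have hr : 0 < r := dist_pos.2 hne
  set x : List.Vector Bool (k + 1) → X := fun τ => (bif τ.head then w else z) τ.tail
  have hx := cond_mem_fiberTuples hz hw hzw
  have hV : ∀ τ, ∃ V ∈ ℬ, x τ ∈ V ∧
      closure V ⊆ L.nbhd τ.tail ∩ ball (x τ) (min ((1 / 2) ^ (k + 1)) (r / 2)) := fun τ =>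
    hℬ.exists_closure_subset (inter_mem ((hℬ.isOpen (L.nbhd_mem _)).mem_nhds (hx.1 τ).2)
      (ball_mem_nhds _ (by positivity)))
  choose V hVℬ hxV hV using hV
  have hball : ∀ τ ε, min ((1 / 2) ^ (k + 1)) (r / 2) ≤ ε → closure (V τ) ⊆ ball (x τ) ε :=
    fun τ ε hε => (hV τ).trans (inter_subset_right.trans (ball_subset_ball hε))
  refine ⟨⟨x, V, hVℬ, ⟨fun τ => ⟨(hx.1 τ).1, hxV τ⟩, hx.2⟩,
    fun τ => subset_closure.trans (hball τ _ (min_le_left _ _))⟩,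
    fun τ => (hV τ).trans inter_subset_left, ?_⟩
  exact (ball_disjoint_ball (show r / 2 + r / 2 ≤ r by linarith)).mono
    (hball _ _ (min_le_right _ _)) (hball _ _ (min_le_right _ _))

lemma exists_schemeLevel_seq (hℬ : IsTopologicalBasis ℬ) (hsplit : SplitsFiberTuples f ℬ C)
    (hC : C.Nonempty) (ν : ∀ k, List.Vector Bool k) :
    ∃ L : ∀ k, SchemeLevel f C ℬ k, ∀ k,
      (∀ τ, closure ((L (k + 1)).nbhd τ) ⊆ (L k).nbhd τ.tail) ∧
      Disjoint (closure ((L (k + 1)).nbhd (false ::ᵥ ν k)))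
        (closure ((L (k + 1)).nbhd (true ::ᵥ ν k))) := by
  obtain ⟨x, hx⟩ := hC
  obtain ⟨L₀⟩ := nonempty_schemeLevel_zero (f := f) hℬ hx
  choose next hnext using fun k (L : SchemeLevel f C ℬ k) => L.exists_refinement hℬ hsplit (ν k)
  exact ⟨fun k => Nat.rec L₀ next k, fun k => hnext k _⟩

lemma exists_continuous_branchMap [CompleteSpace X] (L : ∀ k, SchemeLevel f C ℬ k)
    (hL : ∀ k τ, closure ((L (k + 1)).nbhd τ) ⊆ (L k).nbhd τ.tail) :
    ∃ φ : (ℕ → Bool) → X, Continuous φ ∧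
      ∀ α n, φ α ∈ (L n).nbhd ⟨res α n, res_length α n⟩ := by
  let A : List Bool → Set X := fun l => (L l.length).nbhd ⟨l, rfl⟩
  have hA : ∀ {l n} (h : l.length = n), (L n).nbhd ⟨l, h⟩ = A l := by
    intro l n h
    subst h
    rfl
  have hanti : CantorScheme.ClosureAntitone A := fun l a => hL l.length ⟨a :: l, rfl⟩
  have hdiam : CantorScheme.VanishingDiam A := by
    intro α
    have hle : ∀ n, ediam (A (res α n)) ≤ ENNReal.ofReal (2 * (1 / 2) ^ n) := by
      intro n
      rw [← hA (res_length α n)]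
      refine ediam_le_of_forall_dist_le fun a ha b hb => ?_
      have hsub := (L n).nbhd_subset_ball ⟨res α n, res_length α n⟩
      linarith [dist_triangle_right a b ((L n).pt ⟨res α n, res_length α n⟩),
        mem_ball.1 (hsub ha), mem_ball.1 (hsub hb)]
    refine tendsto_of_tendsto_of_tendsto_of_le_of_le tendsto_const_nhds ?_ (fun _ => bot_le) hle
    simpa using ENNReal.tendsto_ofReal
      ((tendsto_pow_atTop_nhds_zero_of_lt_one (r := (1 / 2 : ℝ)) (by norm_num)
        (by norm_num)).const_mul 2)
  have hdom := hanti.map_of_vanishingDiam hdiam fun l => ⟨_, ((L l.length).pt_mem.1 _).2⟩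
  refine ⟨fun α => (CantorScheme.inducedMap A).2 ⟨α, hdom ▸ mem_univ α⟩,
    hdiam.map_continuous.comp (continuous_id.subtype_mk _), fun α n => ?_⟩
  rw [hA]
  exact CantorScheme.map_mem _ n

lemma tendsto_pt_res (L : ∀ k, SchemeLevel f C ℬ k) {α : ℕ → Bool} {p : X}
    (hp : ∀ n, p ∈ (L n).nbhd ⟨res α n, res_length α n⟩) :
    Tendsto (fun n => (L n).pt ⟨res α n, res_length α n⟩) atTop (𝓝 p) := by
  refine tendsto_iff_dist_tendsto_zero.2 (squeeze_zero (fun _ => dist_nonneg) (fun n => ?_)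
    (tendsto_pow_atTop_nhds_zero_of_lt_one (by norm_num) (by norm_num : (1 / 2 : ℝ) < 1)))
  rw [dist_comm]
  exact (mem_ball.1 ((L n).nbhd_subset_ball _ (hp n))).le

lemma apply_eq_of_forall_mem_nbhd [TopologicalSpace Y] [T2Space Y] (hf : Continuous f)
    (L : ∀ k, SchemeLevel f C ℬ k) {α β : ℕ → Bool} {p q : X} (hp : ∀ n, p ∈ (L n).nbhd ⟨res α n, res_length α n⟩)
    (hq : ∀ n, q ∈ (L n).nbhd ⟨res β n, res_length β n⟩) : f p = f q :=
  tendsto_nhds_unique ((hf.tendsto p).comp (tendsto_pt_res L hp))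
    (((hf.tendsto q).comp (tendsto_pt_res L hq)).congr fun n => (L n).pt_mem.2 _ _)

end Scheme

lemma exists_seq_frequently_mem_cylinder :
    ∃ s : ℕ → ℕ → Bool, ∀ γ m, ∃ n, m ≤ n ∧ s n ∈ PiNat.cylinder γ m := by
  obtain ⟨d, hd⟩ := exists_dense_seq (ℕ → Bool)
  refine ⟨fun n => d n.unpair.1, fun γ m => ?_⟩
  obtain ⟨j, hj⟩ := hd.exists_mem_open (isOpen_cylinder _ γ m) ⟨γ, self_mem_cylinder γ m⟩
  exact ⟨Nat.pair j m, Nat.right_le_pair j m, by simpa using hj⟩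

lemma exists_cylinder_subset_preimage_singleton {Z : Type*} [TopologicalSpace Z] [T1Space Z]
    {φ : (ℕ → Bool) → Z} (hφ : Continuous φ) (hrange : (range φ).Countable) :
    ∃ γ m z, PiNat.cylinder γ m ⊆ φ ⁻¹' {z} := by
  have : Countable (range φ) := hrange.to_subtype
  obtain ⟨z, γ, hγ⟩ := nonempty_interior_of_iUnion_of_closed
    (f := fun z : range φ => φ ⁻¹' {(z : Z)}) (fun z => isClosed_singleton.preimage hφ)
    (eq_univ_of_forall fun α => mem_iUnion.2 ⟨⟨φ α, mem_range_self α⟩, rfl⟩)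
  obtain ⟨_, ⟨x, m, rfl⟩, -, hsub⟩ :=
    (isTopologicalBasis_cylinders _).exists_subset_of_mem_open hγ isOpen_interior
  exact ⟨x, m, z, hsub.trans interior_subset⟩

lemma res_update_succ {β : Type*} (x : ℕ → β) (n : ℕ) (b : β) :
    res (update x n b) (n + 1) = b :: res x n := by
  rw [res_succ, update_self, res_eq_res.2 fun i hi => update_of_ne hi.ne _ _]

lemma update_mem_cylinder {β : Type*} (x : ℕ → β) (n : ℕ) (b : β) :
    update x n b ∈ PiNat.cylinder x n :=
  mem_cylinder_iff.2 fun _ hi => update_of_ne hi.ne _ _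

theorem eq_empty_of_splitsFiberTuples {X Y : Type*} [MetricSpace X] [CompleteSpace X]
    [TopologicalSpace Y] [T2Space Y] {f : X → Y} (hf : Continuous f)
    (hfib : ∀ y, (f ⁻¹' {y}).Countable) {ℬ : Set (Set X)} (hℬ : IsTopologicalBasis ℬ)
    {C : Set X} (hsplit : SplitsFiberTuples f ℬ C) : C = ∅ := by
  by_contra hC
  obtain ⟨s, hs⟩ := exists_seq_frequently_mem_cylinder
  obtain ⟨L, hL⟩ := exists_schemeLevel_seq hℬ hsplit (nonempty_iff_ne_empty.2 hC)
    fun n => ⟨res (s n) n, res_length _ _⟩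
  obtain ⟨φ, hφc, hφL⟩ := exists_continuous_branchMap L fun k => (hL k).1
  have hrange : (range φ).Countable := (hfib (f (φ 0))).mono <| by
    rintro _ ⟨α, rfl⟩
    exact apply_eq_of_forall_mem_nbhd hf L (hφL α) (hφL 0)
  obtain ⟨γ, m, z, hγ⟩ := exists_cylinder_subset_preimage_singleton hφc hrange
  obtain ⟨n, hmn, hsn⟩ := hs γ m
  have hz : ∀ b, φ (update (s n) n b) = z := fun b => hγ <|
    mem_cylinder_iff_eq.1 hsn ▸ cylinder_anti _ hmn (update_mem_cylinder (s n) n b)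
  have hmem : ∀ b, z ∈ closure ((L (n + 1)).nbhd (b ::ᵥ ⟨res (s n) n, res_length _ _⟩)) := by
    intro b
    have hnode : b ::ᵥ ⟨res (s n) n, res_length _ _⟩ =
        ⟨res (update (s n) n b) (n + 1), res_length _ _⟩ :=
      Subtype.ext (res_update_succ (s n) n b).symm
    rw [hnode, ← hz b]
    exact subset_closure (hφL _ _)
  exact disjoint_left.1 (hL n).2 (hmem false) (hmem true)

theorem exists_seq_measurableSet_injOn_cover {X Y : Type*} [TopologicalSpace X] [PolishSpace X]
    [MeasurableSpace X] [BorelSpace X] [TopologicalSpace Y] [T2Space Y] {f : X → Y}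
    (hf : Continuous f) (hfib : ∀ y, (f ⁻¹' {y}).Countable) :
    ∃ S : ℕ → Set X, (∀ n, MeasurableSet (S n) ∧ InjOn f (S n)) ∧ ⋃ n, S n = univ := by
  obtain ⟨ℬ, hℬc, -, hℬ⟩ := exists_countable_basis X
  obtain ⟨𝒮, h𝒮c, h𝒮, hsplit⟩ :=
    exists_countable_injOn_splitsFiberTuples_compl hf hℬc fun U hU => hℬ.isOpen hU
  let := upgradeIsCompletelyMetrizable X
  have hcover : ⋃₀ 𝒮 = univ := compl_empty_iff.1 (eq_empty_of_splitsFiberTuples hf hfib hℬ hsplit)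
  obtain ⟨S, hS⟩ := (h𝒮c.insert ∅).exists_eq_range (insert_nonempty ∅ 𝒮)
  refine ⟨S, fun n => ?_, by rw [← sUnion_range, ← hS, sUnion_insert, empty_union, hcover]⟩
  rcases (hS ▸ mem_range_self n : S n ∈ insert ∅ 𝒮) with h | h
  · exact h ▸ ⟨.empty, injOn_empty f⟩
  · exact h𝒮 _ h

end LuzinNovikov

theorem Measurable.exists_polishSpace_borelSpace_continuous {X Y : Type*} [MeasurableSpace X]
    [StandardBorelSpace X] [TopologicalSpace Y] [SecondCountableTopology Y] [MeasurableSpace Y]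
    [OpensMeasurableSpace Y] {f : X → Y} (hf : Measurable f) :
    ∃ t : TopologicalSpace X, PolishSpace (h := t) ∧ @BorelSpace X t _ ∧ Continuous[t, _] f := by
  let u := upgradeStandardBorel X
  obtain ⟨t, hle, hcont, hpol⟩ := hf.exists_continuous
  refine ⟨t, hpol, ⟨?_⟩, hcont⟩
  rw [eq_borel_upgradeStandardBorel X, borel_eq_borel_of_le hpol u.toPolishSpace hle]

/-- Luzin–Novikov selection theorem: a Borel map between standard Borel
spaces with countable fibers has Borel image, and the domain admits a countable Borel
partition on whose pieces the map is injective. -/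
theorem luzin_novikov_selection {X Y : Type}
    [MeasurableSpace X] [StandardBorelSpace X]
    [MeasurableSpace Y] [StandardBorelSpace Y]
    (f : X → Y) (hf : Measurable f)
    (hfib : ∀ y : Y, (f ⁻¹' {y}).Countable) :
    MeasurableSet (Set.range f) ∧
    ∃ Xi : ℕ → Set X,
      (∀ i, MeasurableSet (Xi i)) ∧
      Pairwise (Function.onFun Disjoint Xi) ∧
      (⋃ i, Xi i) = Set.univ ∧
      ∀ i, Set.InjOn f (Xi i) := by
  let := upgradeStandardBorel Y
  obtain ⟨t, _, _, hcont⟩ := hf.exists_polishSpace_borelSpace_continuous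
  obtain ⟨S, hS, hSU⟩ := LuzinNovikov.exists_seq_measurableSet_injOn_cover hcont hfib
  have hmeas : ∀ n, MeasurableSet (disjointed S n) := .disjointed fun n => (hS n).1
  have hinj : ∀ n, InjOn f (disjointed S n) := fun n => (hS n).2.mono (disjointed_subset S n)
  have hcover : ⋃ n, disjointed S n = univ := by rw [iUnion_disjointed, hSU]
  refine ⟨?_, disjointed S, hmeas, disjoint_disjointed S, hcover, hinj⟩
  rw [← image_univ, ← hcover, image_iUnion]
  exact .iUnion fun n => (hmeas n).image_of_measurable_injOn hf (hinj n)
end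

section
/- Let A be an abelian category with enough injective objects, equipped with a completion functor and rank metric structure as in the category of complete R(G,μ)-modules. Let Z be an injective object. Then, by transfinite induction along an ordinal α of uncountable cofinality — setting Z_0 = Z, taking Z_{β+1} to be an injective module containing the completion of Z_β, and Z_β = ⋃_{β'<β} Z_{β'} at limit ordinals — the module Z_α is complete. In particular the category of complete R(G,μ)-modules has enough injective objects. -/
/-!
A sequence in `Z_α = ⋃_{β<α} Z_β` has each of its countably many terms in some `Z_β` with
`β < α`; since `α` has uncountable cofinality, the supremum `β` of these indices is still
`< α`, so the whole sequence lies in `Z_β`. Its limit in the complete ambient space lies in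
the closure of `Z_β`, hence in `Z_{β+1} ⊆ Z_α`. So `Z_α` is closed, hence complete.
-/

open Filter

theorem isSeqClosed_of_forall_seq_mem_closure_subset {X : Type*} [TopologicalSpace X] {s : Set X}
    (h : ∀ u : ℕ → X, (∀ n, u n ∈ s) → ∃ t, (∀ n, u n ∈ t) ∧ closure t ⊆ s) :
    IsSeqClosed s := by
  intro u x hu hux
  obtain ⟨t, hut, hts⟩ := h u hu
  exact hts (mem_closure_of_tendsto hux (Eventually.of_forall hut))

theorem Ordinal.exists_lt_forall_seq_mem {X : Type*} {α : Ordinal}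
    (hcof : Cardinal.aleph0 < α.cof) {s : Ordinal → Set X} (hs : MonotoneOn s (Set.Iio α))
    {u : ℕ → X} (hu : ∀ n, u n ∈ ⋃ (γ : Ordinal) (_ : γ < α), s γ) :
    ∃ β < α, ∀ n, u n ∈ s β := by
  simp only [Set.mem_iUnion, exists_prop] at hu
  choose g hgα hgu using hu
  have hβ : ⨆ n, g n < α := Ordinal.lift_iSup_lt_of_lt_cof (by simpa using hcof) hgα
  exact ⟨⨆ n, g n, hβ, fun n => hs (hgα n) hβ (Ordinal.le_iSup g n) (hgu n)⟩

theorem transfinite_injective_completion_general (R : Type) [Ring R]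
    (W : Type) [AddCommGroup W] [Module R W] [PseudoMetricSpace W] [CompleteSpace W]
    (α : Ordinal) (hcof : Cardinal.aleph0 < α.cof)
    (Z : Ordinal → Submodule R W)
    (hmono : ∀ β γ : Ordinal, β ≤ γ → γ ≤ α → Z β ≤ Z γ)
    (hlimit : ∀ β ≤ α, Order.IsSuccLimit β →
      (Z β : Set W) = ⋃ (γ : Ordinal) (_ : γ < β), (Z γ : Set W))
    (hsucc : ∀ β < α, closure (Z β : Set W) ⊆ (Z (β + 1) : Set W) ∧
      Module.Injective R ↥(Z (β + 1))) :
    IsComplete (Z α : Set W) := by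
  have hαlim : Order.IsSuccLimit α :=
    Ordinal.one_lt_cof_iff.mp (Cardinal.one_lt_aleph0.trans hcof)
  refine IsClosed.isComplete (IsSeqClosed.isClosed ?_)
  refine isSeqClosed_of_forall_seq_mem_closure_subset fun u hu => ?_
  rw [hlimit α le_rfl hαlim] at hu
  obtain ⟨β, hβα, huβ⟩ := Ordinal.exists_lt_forall_seq_mem hcof
    (s := fun γ => (Z γ : Set W)) (fun β _ γ hγ hβγ => hmono β γ hβγ hγ.le) hu
  exact ⟨Z β, huβ, (hsucc β hβα).1.trans (hmono _ _ (hαlim.succ_lt hβα).le le_rfl)⟩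

/-- construction of enough injectives in the category of complete modules:
let `R` be a ring (e.g. the groupoid ring `R(G,μ)`), `W` an ambient complete metric
`R`-module (completeness playing the role of the rank-metric completion), and `α` an
ordinal of uncountable cofinality. Given a transfinite chain of submodules `Z_β` with
`Z_0` injective, `Z_{β+1}` an injective module containing the completion (closure) of
`Z_β`, and `Z_β = ⋃_{β' < β} Z_{β'}` at limit ordinals, the module `Z_α` is complete.
(In particular the category of complete `R(G,μ)`-modules has enough injectives.) -/
theorem transfinite_injective_completion (R : Type) [Ring R]
    (W : Type) [AddCommGroup W] [Module R W] [PseudoMetricSpace W] [CompleteSpace W]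
    (α : Ordinal) (hcof : Cardinal.aleph0 < α.cof)
    (Z : Ordinal → Submodule R W)
    (hinj0 : Module.Injective R ↥(Z 0))
    (hmono : ∀ β γ : Ordinal, β ≤ γ → γ ≤ α → Z β ≤ Z γ)
    (hlimit : ∀ β ≤ α, Order.IsSuccLimit β →
      (Z β : Set W) = ⋃ (γ : Ordinal) (_ : γ < β), (Z γ : Set W))
    (hsucc : ∀ β < α, closure (Z β : Set W) ⊆ (Z (β + 1) : Set W) ∧
      Module.Injective R ↥(Z (β + 1))) :
    IsComplete (Z α : Set W) :=
  transfinite_injective_completion_general R W α hcof Z hmono hlimit hsucc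
end
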